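/- Let F = Σ_{k≥0} x^{(2k+1)^2} ∈ (Z/2)[[x]] and G = F(x^3). Then G = D^3, where D = pr(F) and pr : (Z/2)[[x]] → (Z/2)[[x]] is the projection Σ c_n x^n ↦ Σ_{(n,3)=1} c_n x^n. -/

import Mathlib

/-!
Over `𝔽₂` squaring is Frobenius, so `D ^ 3 = D(x²) · D` and the coefficient of `xⁿ` in `D ^ 3` is
the parity of the number of odd pairs `(u, v)`, both prime to `3`, with `2u² + v² = n`.
Up to signs, the maps `(u, v) ↦ ((u ± 2v) / 3, (4u ∓ v) / 3)` multiply `v + u√-2` by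
`(1 ∓ √-2) / (1 ± √-2)`; they preserve `2u² + v²` and join the odd solutions into a graph in which
a solution has odd degree exactly when either `u ≠ v` and `3 ∤ uv`, or `u = v` and `3 ∣ u`.
By the handshake lemma the number of solutions prime to `3` then has the parity of the number of
diagonal solutions `3u² = n`, which is the coefficient of `xⁿ` in `G`.
-/

open scoped Classical

noncomputable def F : PowerSeries (ZMod 2) :=
  PowerSeries.mk fun n => if ∃ k, n = (2 * k + 1) ^ 2 then 1 else 0

/-- `G = F(x^3)`. -/
noncomputable def G : PowerSeries (ZMod 2) :=
  PowerSeries.mk fun n => if ∃ k, n = 3 * (2 * k + 1) ^ 2 then 1 else 0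

/-- `pr` deletes all terms whose exponent is divisible by 3. -/
noncomputable def pr (f : PowerSeries (ZMod 2)) : PowerSeries (ZMod 2) :=
  PowerSeries.mk fun n => if 3 ∣ n then 0 else PowerSeries.coeff n f

/-- `D = pr(F)`. -/
noncomputable def D : PowerSeries (ZMod 2) := pr F

open PowerSeries Finset

theorem PowerSeries.coeff_pow_expChar {R : Type*} [CommSemiring R] (p : ℕ) [ExpChar R p]
    (f : R⟦X⟧) (n : ℕ) :
    coeff n (f ^ p) = if p ∣ n then coeff (n / p) f ^ p else 0 := by
  set g := trunc (n + 1) f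
  have hg : coeff n (f ^ p) = (g ^ p).coeff n := by
    rw [← coeff_coe_trunc_of_lt n.lt_succ_self, ← trunc_trunc_pow,
      coeff_coe_trunc_of_lt n.lt_succ_self, ← Polynomial.coeff_coe, Polynomial.coe_pow]
  rw [hg, ← Polynomial.map_frobenius_expand, Polynomial.coeff_map,
    Polynomial.coeff_expand (expChar_pos R p)]
  split_ifs
  · rw [frobenius_def, ← Polynomial.coeff_coe, coeff_coe_trunc_of_lt]
    exact Nat.lt_succ_of_le (Nat.div_le_self n p)
  · exact map_zero _

theorem SimpleGraph.even_sum_card_filter_adj {V : Type*} (G : SimpleGraph V) [DecidableRel G.Adj]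
    (s : Finset V) : Even (∑ v ∈ s, #{w ∈ s | G.Adj v w}) := by
  have hdeg (v : s) : (G.induce (s : Set V)).degree v = #{w ∈ s | G.Adj v w} := by
    rw [← card_neighborFinset_eq_degree, neighborFinset_eq_filter, ← card_subtype]
    simp only [SetLike.coe_sort_coe, univ_eq_attach, card_subtype, comap_adj,
      Function.Embedding.subtype_apply]
    rw [filter_attach, card_map, card_attach]
  rw [← sum_coe_sort s]
  simp_rw [← hdeg, sum_degrees_eq_twice_card_edges]
  exact even_two_mul _

def oddReps (n : ℕ) : Finset (ℕ × ℕ) :=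
  {p ∈ range (n + 1) ×ˢ range (n + 1) | p.1 % 2 = 1 ∧ p.2 % 2 = 1 ∧ 2 * p.1 ^ 2 + p.2 ^ 2 = n}

lemma mem_oddReps {n : ℕ} {p : ℕ × ℕ} :
    p ∈ oddReps n ↔ p.1 % 2 = 1 ∧ p.2 % 2 = 1 ∧ 2 * p.1 ^ 2 + p.2 ^ 2 = n := by
  have h1 : p.1 ≤ p.1 ^ 2 := Nat.le_self_pow two_ne_zero _
  have h2 : p.2 ≤ p.2 ^ 2 := Nat.le_self_pow two_ne_zero _
  simp only [oddReps, mem_filter, mem_product, mem_range, and_iff_right_iff_imp]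
  omega

def reflPlus (p : ℕ × ℕ) : ℕ × ℕ := ((p.1 + 2 * p.2) / 3, ((4 * p.1 : ℤ) - p.2).natAbs / 3)

def reflMinus (p : ℕ × ℕ) : ℕ × ℕ := (((2 * p.2 : ℤ) - p.1).natAbs / 3, (4 * p.1 + p.2) / 3)

def reflGraph : SimpleGraph (ℕ × ℕ) where
  Adj p q := p ≠ q ∧ ((3 ∣ p.1 + 2 * p.2 ∧ q = reflPlus p) ∨ (3 ∣ p.1 + p.2 ∧ q = reflMinus p))
  symm.symm := by
    rintro ⟨u, v⟩ ⟨s, t⟩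
    simp only [reflPlus, reflMinus, ne_eq, Prod.mk.injEq]
    omega
  loopless.irrefl _ h := h.1 rfl

lemma mem_oddReps_of_reflGraph_adj {n : ℕ} {p q : ℕ × ℕ} (hp : p ∈ oddReps n)
    (hpq : reflGraph.Adj p q) : q ∈ oddReps n := by
  obtain ⟨u, v⟩ := p
  obtain ⟨s, t⟩ := q
  rw [mem_oddReps] at hp ⊢
  simp only [reflGraph, reflPlus, reflMinus, ne_eq, Prod.mk.injEq] at hp hpq ⊢
  obtain ⟨hu, hv, rfl⟩ := hp
  have hform : ((3 * s : ℤ) = u + 2 * v ∧ (3 * t : ℤ) = ((4 * u : ℤ) - v).natAbs) ∨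
      ((3 * s : ℤ) = ((2 * v : ℤ) - u).natAbs ∧ (3 * t : ℤ) = 4 * u + v) := by
    omega
  refine ⟨by omega, by omega, ?_⟩
  have h9 : (9 : ℤ) * (2 * s ^ 2 + t ^ 2) = 9 * (2 * u ^ 2 + v ^ 2) := by
    rcases hform with ⟨hs, ht⟩ | ⟨hs, ht⟩
    · have ht2 := Int.natAbs_sq (4 * u - v : ℤ)
      rw [← ht] at ht2
      linear_combination (2 * (3 * s + u + 2 * v) : ℤ) * hs + ht2
    · have hs2 := Int.natAbs_sq (2 * v - u : ℤ)
      rw [← hs] at hs2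
      linear_combination 2 * hs2 + (3 * t + 4 * u + v : ℤ) * ht
  exact_mod_cast mul_left_cancel₀ (by norm_num) h9

lemma card_filter_eq_and {α : Type*} [DecidableEq α] (s : Finset α) (a : α) (c : Prop) [Decidable c]
    (h : c → a ∈ s) : #{q ∈ s | q = a ∧ c} = if c then 1 else 0 := by
  split_ifs with hc
  · simp [hc, filter_eq', h hc]
  · simp [hc]

lemma card_reflGraph_adj {n : ℕ} {p : ℕ × ℕ} (hp : p ∈ oddReps n) :
    #{q ∈ oddReps n | reflGraph.Adj p q} =
      (if 3 ∣ p.1 + 2 * p.2 ∧ p.1 ≠ p.2 then 1 else 0) + (if 3 ∣ p.1 + p.2 then 1 else 0) := by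
  -- On odd pairs `reflPlus` fixes exactly the diagonal, `reflMinus` fixes nothing, and the two
  -- never agree.
  have hsplit (q : ℕ × ℕ) : (if reflGraph.Adj p q then 1 else 0) =
      (if q = reflPlus p ∧ (3 ∣ p.1 + 2 * p.2 ∧ p.1 ≠ p.2) then 1 else 0) +
        (if q = reflMinus p ∧ 3 ∣ p.1 + p.2 then 1 else 0) := by
    obtain ⟨u, v⟩ := p
    obtain ⟨s, t⟩ := q
    obtain ⟨hu, hv, -⟩ := mem_oddReps.mp hp
    simp only [reflGraph, reflPlus, reflMinus, ne_eq, Prod.mk.injEq] at hu hv ⊢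
    split_ifs <;> omega
  rw [card_filter, sum_congr rfl fun q _ => hsplit q, sum_add_distrib, ← card_filter,
    ← card_filter]
  obtain ⟨u, v⟩ := p
  obtain ⟨hu, hv, -⟩ := mem_oddReps.mp hp
  congr 1 <;> refine card_filter_eq_and _ _ _ fun hc => mem_oddReps_of_reflGraph_adj hp ?_ <;>
    simp only [reflGraph, reflPlus, reflMinus, ne_eq, Prod.mk.injEq, and_true] at hc hu hv ⊢ <;>
    omega

lemma card_reflGraph_adj_mod_two {n : ℕ} {p : ℕ × ℕ} (hp : p ∈ oddReps n) :
    (#{q ∈ oddReps n | reflGraph.Adj p q} : ZMod 2) =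
      (if p.1 % 3 ≠ 0 ∧ p.2 % 3 ≠ 0 then 1 else 0) + (if p.1 = p.2 then 1 else 0) := by
  rw [card_reflGraph_adj hp]
  push_cast [Nat.cast_ite]
  rcases (by omega : p.1 % 3 = 0 ∨ p.1 % 3 = 1 ∨ p.1 % 3 = 2) with h1 | h1 | h1 <;>
    rcases (by omega : p.2 % 3 = 0 ∨ p.2 % 3 = 1 ∨ p.2 % 3 = 2) with h2 | h2 | h2 <;>
    split_ifs <;> first | rfl | omega

lemma card_oddReps_coprime_eq_card_diag (n : ℕ) :
    (#{p ∈ oddReps n | p.1 % 3 ≠ 0 ∧ p.2 % 3 ≠ 0} : ZMod 2) = #{p ∈ oddReps n | p.1 = p.2} := by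
  have hsum := ZMod.natCast_eq_zero_iff_even.mpr (reflGraph.even_sum_card_filter_adj (oddReps n))
  rw [Nat.cast_sum, sum_congr rfl fun p hp => card_reflGraph_adj_mod_two hp, sum_add_distrib,
    sum_boole, sum_boole] at hsum
  exact CharTwo.add_eq_zero.mp hsum

lemma card_oddReps_diag (n : ℕ) :
    #{p ∈ oddReps n | p.1 = p.2} = if ∃ k, n = 3 * (2 * k + 1) ^ 2 then 1 else 0 := by
  split_ifs with h
  · obtain ⟨k, rfl⟩ := h
    rw [card_eq_one]
    refine ⟨(2 * k + 1, 2 * k + 1), ?_⟩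
    ext ⟨a, b⟩
    simp only [mem_filter, mem_oddReps, mem_singleton, Prod.mk.injEq]
    constructor
    · rintro ⟨⟨-, -, hab⟩, rfl⟩
      have := Nat.pow_left_injective two_ne_zero (show a ^ 2 = (2 * k + 1) ^ 2 by omega)
      exact ⟨this, this⟩
    · rintro ⟨rfl, rfl⟩
      omega
  · rw [card_eq_zero, filter_eq_empty_iff]
    rintro ⟨a, b⟩ hp (rfl : a = b)
    obtain ⟨ha, -, rfl⟩ := mem_oddReps.mp hp
    exact h ⟨a / 2, by rw [show 2 * (a / 2) + 1 = a by omega]; ring⟩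

lemma coeff_D (m : ℕ) : coeff m D = if ∃ j, j % 2 = 1 ∧ j % 3 ≠ 0 ∧ m = j ^ 2 then 1 else 0 := by
  rw [D, pr, coeff_mk, F, coeff_mk]
  by_cases h3 : 3 ∣ m
  · rw [if_pos h3, if_neg]
    rintro ⟨j, -, hj, rfl⟩
    have := Nat.prime_three.dvd_of_dvd_pow h3
    omega
  · rw [if_neg h3]
    refine if_congr ⟨?_, ?_⟩ rfl rfl
    · rintro ⟨k, rfl⟩
      exact ⟨2 * k + 1, by omega, fun hk => h3 (dvd_pow (by omega) two_ne_zero), rfl⟩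
    · rintro ⟨j, hj, -, rfl⟩
      exact ⟨j / 2, by rw [show 2 * (j / 2) + 1 = j by omega]⟩

lemma coeff_D_sq (m : ℕ) :
    coeff m (D ^ 2) = if ∃ j, j % 2 = 1 ∧ j % 3 ≠ 0 ∧ m = 2 * j ^ 2 then 1 else 0 := by
  rw [coeff_pow_expChar, ZMod.pow_card, coeff_D]
  by_cases h2 : 2 ∣ m
  · rw [if_pos h2]
    exact if_congr (exists_congr fun j => by omega) rfl rfl
  · rw [if_neg h2, if_neg]
    rintro ⟨j, -, -, rfl⟩
    exact h2 (dvd_mul_right 2 _)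

lemma coeff_D_cube (n : ℕ) :
    coeff n (D ^ 3) = (#{p ∈ oddReps n | p.1 % 3 ≠ 0 ∧ p.2 % 3 ≠ 0} : ZMod 2) := by
  rw [pow_succ, coeff_mul]
  simp_rw [coeff_D_sq, coeff_D, ite_zero_mul_ite_zero, mul_one]
  rw [sum_boole]
  congr 1
  symm
  refine card_nbij (fun p => (2 * p.1 ^ 2, p.2 ^ 2)) ?_ ?_ ?_
  · rintro ⟨u, v⟩ hp
    simp only [coe_filter, Set.mem_ofPred_eq, mem_oddReps, HasAntidiagonal.mem_antidiagonal] at hp ⊢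
    exact ⟨by omega, ⟨u, hp.1.1, hp.2.1, rfl⟩, ⟨v, hp.1.2.1, hp.2.2, rfl⟩⟩
  · rintro ⟨u, v⟩ - ⟨u', v'⟩ - h
    simp only [Prod.mk.injEq] at h ⊢
    exact ⟨Nat.pow_left_injective two_ne_zero (show u ^ 2 = u' ^ 2 by omega),
      Nat.pow_left_injective two_ne_zero h.2⟩
  · rintro ⟨i, k⟩ hik
    simp only [coe_filter, Set.mem_ofPred_eq, HasAntidiagonal.mem_antidiagonal] at hik
    obtain ⟨hn, ⟨u, hu2, hu3, rfl⟩, ⟨v, hv2, hv3, rfl⟩⟩ := hik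
    refine ⟨(u, v), ?_, rfl⟩
    simp only [coe_filter, Set.mem_ofPred_eq, mem_oddReps]
    exact ⟨⟨hu2, hv2, hn⟩, hu3, hv3⟩

theorem stmt_14 : G = D ^ 3 := by
  ext n
  rw [coeff_D_cube, card_oddReps_coprime_eq_card_diag, card_oddReps_diag, G, coeff_mk]
  split_ifs <;> simp
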